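/- Conservation of total velocity along closed-loop trajectories: under the closed-loop dynamics with symmetric adjacency matrix a and antisymmetric desired gaps p*_ij = q_i − q_j, the total velocity ∑_{i=1}^N v_i(t) is constant in t, i.e. ∑_{i=1}^N v_i(t) = ∑_{i=1}^N v_i(0) for all t ≥ 0. -/

import Mathlib

/-- `sig(x)^α := sign(x) · |x|^α`. -/
noncomputable def sig (x α : ℝ) : ℝ := Real.sign x * |x| ^ α

lemma sig_neg (x α : ℝ) : sig (-x) α = - sig x α := by
  simp [sig, Real.sign_neg]

lemma double_sum_antisym {N : ℕ} (a f : Fin N → Fin N → ℝ)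
    (hsym : ∀ i j, a i j = a j i) (hf : ∀ i j, f j i = - f i j) :
    ∑ i, ∑ j, a i j * f i j = 0 := by
  have h1 : ∑ i, ∑ j, a i j * f i j = ∑ j, ∑ i, a i j * f i j := Finset.sum_comm
  have h2 : ∑ j, ∑ i, a i j * f i j = - ∑ i, ∑ j, a i j * f i j := by
    rw [← Finset.sum_neg_distrib]
    refine Finset.sum_congr rfl fun j _ => ?_
    rw [← Finset.sum_neg_distrib]
    refine Finset.sum_congr rfl fun i _ => ?_
    rw [hsym i j, hf i j]; ring
  linarith [h1, h2]

/-- Conservation of total velocity along closed-loop trajectories: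
`∑ᵢ vᵢ(t) = ∑ᵢ vᵢ(0)` for all `t ≥ 0`. -/
theorem total_velocity_conserved
    (N : ℕ) (G : SimpleGraph (Fin N)) [DecidableRel G.Adj]
    (a : Fin N → Fin N → ℝ) (ha : ∀ i j, a i j = if G.Adj i j then 1 else 0)
    (α : ℝ) (hα : α ∈ Set.Ioo (0 : ℝ) 1)
    (q : Fin N → ℝ) (pstar : Fin N → Fin N → ℝ)
    (hps : ∀ i j, pstar i j = q i - q j)
    (p v : Fin N → ℝ → ℝ)
    (hdp : ∀ i, ∀ t : ℝ, 0 ≤ t → HasDerivAt (p i) (v i t) t)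
    (hdv : ∀ i, ∀ t : ℝ, 0 ≤ t → HasDerivAt (v i)
      (-(∑ j, a i j * sig (p i t - p j t - pstar i j) (2 * α / (1 + α)))
        - ∑ j, a i j * sig (v i t - v j t) α) t) :
    ∀ t : ℝ, 0 ≤ t → ∑ i, v i t = ∑ i, v i 0 := by
  have hsym : ∀ i j, a i j = a j i := by
    intro i j; rw [ha, ha]; simp [G.adj_comm]
  have hderiv : ∀ s : ℝ, 0 ≤ s → HasDerivAt (fun τ => ∑ i, v i τ) 0 s := by
    intro s hs
    have h := HasDerivAt.fun_sum (fun i (_ : i ∈ Finset.univ) => hdv i s hs)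
    refine h.congr_deriv ?_
    have e1 : ∑ i, ∑ j, a i j * sig (p i s - p j s - pstar i j) (2 * α / (1 + α)) = 0 := by
      apply double_sum_antisym _ _ hsym
      intro i j
      have : p j s - p i s - pstar j i = -(p i s - p j s - pstar i j) := by
        rw [hps, hps]; ring
      rw [this, sig_neg]
    have e2 : ∑ i, ∑ j, a i j * sig (v i s - v j s) α = 0 := by
      apply double_sum_antisym _ _ hsym
      intro i j
      have : v j s - v i s = -(v i s - v j s) := by ring
      rw [this, sig_neg]
    have : ∑ i, (-(∑ j, a i j * sig (p i s - p j s - pstar i j) (2 * α / (1 + α)))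
        - ∑ j, a i j * sig (v i s - v j s) α)
        = -(∑ i, ∑ j, a i j * sig (p i s - p j s - pstar i j) (2 * α / (1 + α)))
          - ∑ i, ∑ j, a i j * sig (v i s - v j s) α := by
      rw [Finset.sum_sub_distrib, Finset.sum_neg_distrib]
    rw [this, e1, e2]; ring
  intro t ht
  rcases eq_or_lt_of_le ht with h | h
  · rw [← h]
  · have hdiff : DifferentiableOn ℝ (fun τ => ∑ i, v i τ) (Set.Icc 0 t) := fun x hx =>
      ((hderiv x hx.1).differentiableAt).differentiableWithinAt
    have hd0 : ∀ x ∈ Set.Ico (0:ℝ) t, derivWithin (fun τ => ∑ i, v i τ) (Set.Icc 0 t) x = 0 := by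
      intro x hx
      have hu : UniqueDiffWithinAt ℝ (Set.Icc (0:ℝ) t) x :=
        (uniqueDiffOn_Icc h) x (Set.Ico_subset_Icc_self hx)
      exact ((hderiv x hx.1).hasDerivWithinAt).derivWithin hu
    exact constant_of_derivWithin_zero hdiff hd0 t (Set.mem_Icc.mpr ⟨ht, le_refl t⟩)
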